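/- Let T ∈ ℝ^{d×d} be positive semidefinite symmetric Toeplitz, let x ~ N(0,T), let Δ > 0, let τ be a triangular dither independent of x, and set ẋ = Q_Δ(x + τ) entrywise. Then for all indices j, k, E[(ẋ_j ẋ_k)²] ≤ 24 ‖T‖₂² + (81/2) Δ⁴. -/

import Mathlib

open MeasureTheory ProbabilityTheory Matrix Real

noncomputable section

/-- The uniform quantizer with level `Δ`: `Q_Δ(x) = Δ(⌊x/Δ⌋ + 1/2)`. -/
def quant (Δ x : ℝ) : ℝ := Δ * (⌊x / Δ⌋ + 1 / 2)

/-- The uniform distribution on `[-Δ/2, Δ/2]`. -/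
def unifMeasure (Δ : ℝ) : Measure ℝ :=
  (ENNReal.ofReal Δ)⁻¹ • (volume.restrict (Set.Icc (-(Δ / 2)) (Δ / 2)))

/-- The triangular-dither distribution: the law of the sum of two independent
uniform random variables on `[-Δ/2, Δ/2]`. -/
def triMeasure (Δ : ℝ) : Measure ℝ :=
  Measure.map (fun p : ℝ × ℝ => p.1 + p.2) ((unifMeasure Δ).prod (unifMeasure Δ))

/-- The centered multivariate Gaussian measure `N(0, T)` on `ℝ^d`, realized as the
pushforward of the standard Gaussian by the positive semidefinite square root of `T`. -/
def multiGaussian {d : ℕ} (T : Matrix (Fin d) (Fin d) ℝ) (hT : T.PosSemidef) :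
    Measure (Fin d → ℝ) :=
  Measure.map (fun z => ((hT.1.eigenvectorUnitary : Matrix (Fin d) (Fin d) ℝ) *
      diagonal (fun i => ((Real.sqrt (hT.1.eigenvalues i) : ℝ) : ℝ)) *
      (star hT.1.eigenvectorUnitary : Matrix (Fin d) (Fin d) ℝ)).mulVec z) (Measure.pi fun _ : Fin d => gaussianReal 0 1)

/-- `R_s`: the ordered pairs `(j, k) ∈ R × R` with `j - k = s`. -/
def pairsOf {d : ℕ} (R : Finset (Fin d)) (s : ℕ) : Finset (Fin d × Fin d) :=
  (R ×ˢ R).filter fun p => (p.1 : ℕ) = (p.2 : ℕ) + s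

/-- A ruler: each distance `s ∈ {0, …, d-1}` is realized by some pair in `R`. -/
def IsRuler {d : ℕ} (R : Finset (Fin d)) : Prop :=
  ∀ s < d, (pairsOf R s).Nonempty

/-- The coverage coefficient `φ(R) = Σ_{s=1}^{d-1} 1/|R_s|`. -/
def coverage {d : ℕ} (R : Finset (Fin d)) : ℝ :=
  ∑ s ∈ Finset.Ico 1 d, (1 : ℝ) / (pairsOf R s).card

/-- The symmetric Toeplitz matrix generated by `a`, with `Toep(a)_{j,k} = a_{|j-k|}`. -/
def toep {d : ℕ} (a : Fin d → ℝ) : Matrix (Fin d) (Fin d) ℝ :=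
  fun j k => a ⟨Nat.dist j.1 k.1, by
    have hj := j.isLt; have hk := k.isLt; simp only [Nat.dist]; omega⟩

/-- The `ℓ²` operator (spectral) norm of a matrix. -/
def opNorm {m : Type*} [Fintype m] [DecidableEq m] (A : Matrix m m ℝ) : ℝ :=
  ‖Matrix.toEuclideanCLM (𝕜 := ℝ) A‖

/-- The Frobenius norm of a matrix. -/
def frobNorm {m : Type*} [Fintype m] (A : Matrix m m ℝ) : ℝ :=
  Real.sqrt (∑ i, ∑ j, (A i j) ^ 2)

/-- The entrywise maximum norm of a matrix. -/
def maxNorm {m : Type*} [Fintype m] (A : Matrix m m ℝ) : ℝ :=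
  ⨆ i, ⨆ j, |A i j|

/-- The principal submatrix of `A` with rows and columns indexed by `R`. -/
def subMatrix {d : ℕ} (A : Matrix (Fin d) (Fin d) ℝ) (R : Finset (Fin d)) :
    Matrix R R ℝ :=
  A.submatrix (fun i : R => (i : Fin d)) (fun j : R => (j : Fin d))

/-- The ruler-based quantized coefficient estimator
`â_s = (1/(n|R_s|)) Σ_l Σ_{(j,k)∈R_s} ẋ_j^{(l)} ẋ_k^{(l)} − (Δ²/4)·1{s=0}`. -/
def hatCoef {d : ℕ} (Δ : ℝ) (R : Finset (Fin d)) (n : ℕ)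
    (xdot : Fin n → Fin d → ℝ) (s : ℕ) : ℝ :=
  (1 / (n * (pairsOf R s).card)) *
      ∑ l, ∑ p ∈ pairsOf R s, xdot l p.1 * xdot l p.2
    - Δ ^ 2 / 4 * (if s = 0 then 1 else 0)

/-- The ruler-based quantized Toeplitz covariance estimator `T̂ = Toep(â)`. -/
def hatT {d : ℕ} (Δ : ℝ) (R : Finset (Fin d)) (n : ℕ)
    (xdot : Fin n → Fin d → ℝ) : Matrix (Fin d) (Fin d) ℝ :=
  toep fun s => hatCoef Δ R n xdot s.1

/-- The quantized samples `ẋ^{(l)} = Q_Δ(x^{(l)} + τ^{(l)})`, as a function of the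
random outcome `ω`. -/
def xdotOf {d n : ℕ} {Ω : Type*} (Δ : ℝ) (x τ : Fin n → Ω → Fin d → ℝ) (ω : Ω) :
    Fin n → Fin d → ℝ :=
  fun l i => quant Δ (x l ω i + τ l ω i)

/-- The setting of the ruler-based quantized Toeplitz covariance estimation problem:
`T` is a positive semidefinite symmetric Toeplitz matrix, `x^{(1)}, …, x^{(n)}` are
i.i.d. samples from `N(0, T)`, the dithers `τ^{(1)}, …, τ^{(n)}` have i.i.d. triangular
entries at level `Δ`, and all samples and dithers are jointly independent. -/
structure QuantSetting {d n : ℕ} {Ω : Type*} [MeasurableSpace Ω] (μ : Measure Ω)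
    (T : Matrix (Fin d) (Fin d) ℝ) (Δ : ℝ)
    (x τ : Fin n → Ω → Fin d → ℝ) : Prop where
  psd : T.PosSemidef
  toeplitz : ∃ a : Fin d → ℝ, T = toep a
  quantLevel : 0 < Δ
  meas_x : ∀ l, Measurable (x l)
  meas_τ : ∀ l, Measurable (τ l)
  law_x : ∀ l, μ.map (x l) = multiGaussian T psd
  law_τ : ∀ l, μ.map (τ l) = Measure.pi fun _ : Fin d => triMeasure Δ
  indep : iIndepFun (Sum.elim x τ) μ

end
noncomputable section

/-- The ruler `R_α = {1,…,d^α} ∪ {d, d−d^{1−α}, …, d−(d^α−1)d^{1−α}}` (with the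
positions `1,…,d` represented by `Fin d`), parametrized by `a = d^α`, `b = d^{1−α}`. -/
def rulerAlpha (d a b : ℕ) : Finset (Fin d) :=
  (Finset.univ.filter fun j : Fin d => (j : ℕ) < a) ∪
    (Finset.univ.filter fun j : Fin d => ∃ t ∈ Finset.range a, (j : ℕ) + t * b + 1 = d)

/-- `L_e(x) = e_0 + 2 Σ_{s=1}^{d-1} e_s cos(2πsx)`. -/
def Lfun {d : ℕ} (e : Fin d → ℝ) (x : ℝ) : ℝ :=
  ∑ s : Fin d, (if (s : ℕ) = 0 then 1 else 2) * e s * Real.cos (2 * Real.pi * s * x)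

/-- Entrywise thresholding of a matrix at level `ζ`. -/
def thresholdMat {d : ℕ} (ζ : ℝ) (A : Matrix (Fin d) (Fin d) ℝ) :
    Matrix (Fin d) (Fin d) ℝ :=
  fun i j => if ζ ≤ |A i j| then A i j else 0

end

/-!
The dither is bounded, `|τ_i| ≤ Δ`, and the quantizer moves a point by at most `Δ/2`, so
`|ẋ_i| ≤ |x_i| + 3Δ/2`. With `(ab)² ≤ (a⁴ + b⁴)/2` and `(s + c)⁴ ≤ 8(s⁴ + c⁴)` this gives
`(ẋ_j ẋ_k)² ≤ 4x_j⁴ + 4x_k⁴ + 8(3Δ/2)⁴` pointwise. Finally `x_i ~ N(0, T_ii)`, whose fourth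
moment `3T_ii²` is read off the moment generating function `exp (T_ii t²/2)`, and
`|T_ii| ≤ ‖T‖₂`.
-/

open scoped NNReal MatrixOrder

lemma integral_pow_four_gaussianReal (v : ℝ≥0) : ∫ x, x ^ 4 ∂gaussianReal 0 v = 3 * v ^ 2 := by
  have hmoment := iteratedDeriv_mgf_zero (X := fun x => x) (μ := gaussianReal 0 v) (by simp) 4
  rw [mgf_fun_id_gaussianReal, iteratedDeriv_eq_iterate] at hmoment
  simp only [Function.iterate_succ, Function.comp_apply, Function.iterate_zero, id, zero_mul,
    zero_add, Pi.pow_apply] at hmoment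
  rw [← hmoment]
  set w : ℝ := (v : ℝ)
  set E : ℝ → ℝ := fun t => rexp (w * t ^ 2 / 2)
  have hE : ∀ t, HasDerivAt E (w * t * E t) t := fun t => by
    have := ((hasDerivAt_pow 2 t).const_mul w).div_const 2 |>.exp
    convert this using 1; push_cast; ring
  have d1 : deriv E = fun t => w * t * E t := funext fun t => (hE t).deriv
  have d2 : deriv (fun t => w * t * E t) = fun t => (w + w ^ 2 * t ^ 2) * E t := by
    funext t
    rw [(((hasDerivAt_id' t).const_mul w).fun_mul (hE t)).deriv]; ring
  have d3 : deriv (fun t => (w + w ^ 2 * t ^ 2) * E t) =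
      fun t => (3 * w ^ 2 * t + w ^ 3 * t ^ 3) * E t := by
    funext t
    rw [((((hasDerivAt_pow 2 t).const_mul (w ^ 2)).const_add w).fun_mul (hE t)).deriv]; ring
  have d4 : deriv (fun t => (3 * w ^ 2 * t + w ^ 3 * t ^ 3) * E t) 0 = 3 * w ^ 2 := by
    rw [((((hasDerivAt_id' (0:ℝ)).const_mul (3 * w ^ 2)).fun_add
      ((hasDerivAt_pow 3 (0:ℝ)).const_mul (w ^ 3))).fun_mul (hE 0)).deriv]
    simp [E]
  rw [d1, d2, d3, d4]

lemma integrable_pow_gaussianReal (μ : ℝ) (v : ℝ≥0) (n : ℕ) :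
    Integrable (fun x => x ^ n) (gaussianReal μ v) :=
  (memLp_id_gaussianReal (μ := μ) (v := v) n).integrable_norm_pow'.mono' (by fun_prop)
    (ae_of_all _ fun x => by simp [norm_pow])

lemma Matrix.PosSemidef.spectral_sqrt_eq_cfc_sqrt {d : ℕ} {T : Matrix (Fin d) (Fin d) ℝ}
    (hT : T.PosSemidef) :
    (hT.1.eigenvectorUnitary : Matrix (Fin d) (Fin d) ℝ) *
      diagonal (fun i => Real.sqrt (hT.1.eigenvalues i)) *
      (star hT.1.eigenvectorUnitary : Matrix (Fin d) (Fin d) ℝ) = CFC.sqrt T := by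
  rw [CFC.sqrt_eq_cfc, cfc_nnreal_eq_real _ T hT.nonneg, hT.1.cfc_eq]
  simp [IsHermitian.cfc, Unitary.conjStarAlgAut_apply, Function.comp_def,
    max_eq_left (hT.eigenvalues_nonneg _)]

-- `multiGaussian T hT` is Mathlib's `multivariateGaussian 0 T` transported along `ofLp`.
lemma hasLaw_eval_multiGaussian {d : ℕ} {T : Matrix (Fin d) (Fin d) ℝ} (hT : T.PosSemidef)
    (i : Fin d) : HasLaw (fun y => y i) (gaussianReal 0 (T i i).toNNReal) (multiGaussian T hT) where
  aemeasurable := (measurable_pi_apply i).aemeasurable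
  map_eq := by
    have hlaw := (measurePreserving_eval_multivariateGaussian (μ := 0) hT (i := i)).map_eq
    rw [multivariateGaussian, ← map_pi_eq_stdGaussian, Measure.map_map (by fun_prop) (by fun_prop),
      Measure.map_map (by fun_prop) (by fun_prop)] at hlaw
    rw [multiGaussian, hT.spectral_sqrt_eq_cfc_sqrt, Measure.map_map (by fun_prop) (by fun_prop)]
    simpa [Function.comp_def] using hlaw

section GaussianSample

variable {Ω : Type*} [MeasurableSpace Ω] {μ : Measure Ω} {d : ℕ}
  {T : Matrix (Fin d) (Fin d) ℝ} {hT : T.PosSemidef} {x : Ω → Fin d → ℝ}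

lemma hasLaw_apply_of_map_eq_multiGaussian (hx : Measurable x)
    (hlaw : μ.map x = multiGaussian T hT) (i : Fin d) :
    HasLaw (fun ω => x ω i) (gaussianReal 0 (T i i).toNNReal) μ :=
  (hasLaw_eval_multiGaussian hT i).comp ⟨hx.aemeasurable, hlaw⟩

lemma integrable_apply_pow_of_map_eq_multiGaussian (hx : Measurable x)
    (hlaw : μ.map x = multiGaussian T hT) (i : Fin d) (n : ℕ) :
    Integrable (fun ω => x ω i ^ n) μ :=
  have hlaw_i := hasLaw_apply_of_map_eq_multiGaussian hx hlaw i
  (hlaw_i.map_eq ▸ integrable_pow_gaussianReal 0 _ n).comp_aemeasurable hlaw_i.aemeasurable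

lemma integral_apply_pow_four_of_map_eq_multiGaussian (hx : Measurable x)
    (hlaw : μ.map x = multiGaussian T hT) (i : Fin d) :
    ∫ ω, x ω i ^ 4 ∂μ = 3 * T i i ^ 2 := by
  have h := (hasLaw_apply_of_map_eq_multiGaussian hx hlaw i).integral_comp
    (f := fun y => y ^ 4) (by fun_prop)
  rwa [integral_pow_four_gaussianReal, Real.coe_toNNReal _ (hT.diag_nonneg), Function.comp_def] at h

end GaussianSample

lemma abs_apply_le_opNorm {n : Type*} [Fintype n] [DecidableEq n] (A : Matrix n n ℝ) (i j : n) :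
    |A i j| ≤ opNorm A := by
  have hcol : ‖toEuclideanCLM (𝕜 := ℝ) A (EuclideanSpace.single j 1)‖ ≤ opNorm A := by
    simpa [opNorm] using (toEuclideanCLM (𝕜 := ℝ) A).le_opNorm (EuclideanSpace.single j 1)
  calc |A i j| = ‖toEuclideanCLM (𝕜 := ℝ) A (EuclideanSpace.single j 1) i‖ := by
        simp [EuclideanSpace.single, mulVec_single]
    _ ≤ opNorm A := (PiLp.norm_apply_le _ i).trans hcol

lemma isProbabilityMeasure_unifMeasure {Δ : ℝ} (hΔ : 0 < Δ) :
    IsProbabilityMeasure (unifMeasure Δ) :=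
  ⟨by simp [unifMeasure, ENNReal.inv_mul_cancel, hΔ]⟩

lemma isProbabilityMeasure_triMeasure {Δ : ℝ} (hΔ : 0 < Δ) :
    IsProbabilityMeasure (triMeasure Δ) :=
  have := isProbabilityMeasure_unifMeasure hΔ
  Measure.isProbabilityMeasure_map (by fun_prop)

lemma ae_abs_le_triMeasure (Δ : ℝ) : ∀ᵐ t ∂triMeasure Δ, |t| ≤ Δ := by
  have hunif : ∀ᵐ t ∂unifMeasure Δ, t ∈ Set.Icc (-(Δ / 2)) (Δ / 2) :=
    Measure.ae_smul_measure (ae_restrict_mem measurableSet_Icc) _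
  rw [triMeasure, ae_map_iff (by fun_prop) (measurableSet_le (by fun_prop) (by fun_prop))]
  filter_upwards [Measure.quasiMeasurePreserving_fst.ae hunif,
    Measure.quasiMeasurePreserving_snd.ae hunif] with p h₁ h₂
  rw [abs_le]; constructor <;> linarith [h₁.1, h₁.2, h₂.1, h₂.2]

lemma ae_abs_eval_le_pi_triMeasure {ι : Type*} [Fintype ι] {Δ : ℝ} (hΔ : 0 < Δ) (i : ι) :
    ∀ᵐ y ∂Measure.pi (fun _ : ι => triMeasure Δ), |y i| ≤ Δ :=
  have := isProbabilityMeasure_triMeasure hΔ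
  (Measure.tendsto_eval_ae_ae (μ := fun _ : ι => triMeasure Δ) (i := i)).eventually
    (ae_abs_le_triMeasure Δ)

lemma abs_quant_le {Δ : ℝ} (hΔ : 0 < Δ) (y : ℝ) : |quant Δ y| ≤ |y| + Δ / 2 := by
  have hlow : Δ * ⌊y / Δ⌋ ≤ y := by
    rw [← le_div_iff₀' hΔ]; exact Int.floor_le _
  have hhigh : y < Δ * (⌊y / Δ⌋ + 1) := by
    rw [← div_lt_iff₀' hΔ]; exact Int.lt_floor_add_one _
  rw [quant, abs_le]
  constructor <;> linarith [le_abs_self y, neg_abs_le y]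

lemma abs_quant_add_le {Δ y e : ℝ} (hΔ : 0 < Δ) (he : |e| ≤ Δ) :
    |quant Δ (y + e)| ≤ |y| + 3 * Δ / 2 := by
  linarith [abs_quant_le hΔ (y + e), abs_add_le y e]

lemma pow_four_le_of_abs_le {a s c : ℝ} (h : |a| ≤ |s| + c) : a ^ 4 ≤ 8 * (s ^ 4 + c ^ 4) := by
  have heven : Even 4 := by decide
  calc a ^ 4 = |a| ^ 4 := (heven.pow_abs a).symm
    _ ≤ (|s| + c) ^ 4 := pow_le_pow_left₀ (abs_nonneg a) h 4
    _ ≤ 2 ^ 3 * (|s| ^ 4 + c ^ 4) := heven.add_pow_le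
    _ = 8 * (s ^ 4 + c ^ 4) := by rw [heven.pow_abs]; norm_num

lemma sq_mul_le_of_abs_le {a b s t c : ℝ} (ha : |a| ≤ |s| + c) (hb : |b| ≤ |t| + c) :
    (a * b) ^ 2 ≤ 4 * s ^ 4 + 4 * t ^ 4 + 8 * c ^ 4 := by
  nlinarith [pow_four_le_of_abs_le ha, pow_four_le_of_abs_le hb, sq_nonneg (a ^ 2 - b ^ 2)]

lemma integral_sq_mul_le_of_abs_le {Ω : Type*} [MeasurableSpace Ω] {μ : Measure Ω}
    [IsProbabilityMeasure μ] {f g X Y : Ω → ℝ} {c : ℝ}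
    (hX : Integrable (fun ω => X ω ^ 4) μ) (hY : Integrable (fun ω => Y ω ^ 4) μ)
    (hf : ∀ᵐ ω ∂μ, |f ω| ≤ |X ω| + c) (hg : ∀ᵐ ω ∂μ, |g ω| ≤ |Y ω| + c) :
    ∫ ω, (f ω * g ω) ^ 2 ∂μ ≤
      4 * ∫ ω, X ω ^ 4 ∂μ + 4 * ∫ ω, Y ω ^ 4 ∂μ + 8 * c ^ 4 := by
  have hsum : Integrable (fun ω => 4 * X ω ^ 4 + 4 * Y ω ^ 4) μ :=
    (hX.const_mul 4).add (hY.const_mul 4)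
  calc ∫ ω, (f ω * g ω) ^ 2 ∂μ ≤ ∫ ω, 4 * X ω ^ 4 + 4 * Y ω ^ 4 + 8 * c ^ 4 ∂μ := by
        refine integral_mono_of_nonneg (ae_of_all _ fun _ => sq_nonneg _)
          (hsum.add (integrable_const _)) ?_
        filter_upwards [hf, hg] with ω hfω hgω
        exact sq_mul_le_of_abs_le hfω hgω
    _ = 4 * ∫ ω, X ω ^ 4 ∂μ + 4 * ∫ ω, Y ω ^ 4 ∂μ + 8 * c ^ 4 := by
        rw [integral_add hsum (integrable_const _), integral_add (hX.const_mul 4) (hY.const_mul 4),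
          integral_const_mul, integral_const_mul, integral_const, probReal_univ, one_smul]

theorem quantized_sample_fourth_moment_bound_general
    {d : ℕ} {Ω : Type} [MeasurableSpace Ω] (μ : Measure Ω) [IsProbabilityMeasure μ]
    (T : Matrix (Fin d) (Fin d) ℝ) (hpsd : T.PosSemidef)
    (Δ : ℝ) (hΔ : 0 < Δ)
    (x τ : Ω → Fin d → ℝ) (hx : Measurable x) (hτ : Measurable τ)
    (hlawx : μ.map x = multiGaussian T hpsd)
    (hlawτ : μ.map τ = Measure.pi fun _ : Fin d => triMeasure Δ) :
    ∀ j k, ∫ ω, (quant Δ (x ω j + τ ω j) * quant Δ (x ω k + τ ω k)) ^ 2 ∂μ ≤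
      24 * opNorm T ^ 2 + 81 / 2 * Δ ^ 4 := by
  intro j k
  have hmoment i : ∫ ω, x ω i ^ 4 ∂μ ≤ 3 * opNorm T ^ 2 := by
    rw [integral_apply_pow_four_of_map_eq_multiGaussian hx hlawx i]
    exact mul_le_mul_of_nonneg_left
      (sq_le_sq.mpr ((abs_apply_le_opNorm T i i).trans (le_abs_self _))) (by norm_num)
  have hquant i : ∀ᵐ ω ∂μ, |quant Δ (x ω i + τ ω i)| ≤ |x ω i| + 3 * Δ / 2 :=
    (ae_of_ae_map hτ.aemeasurable (hlawτ ▸ ae_abs_eval_le_pi_triMeasure hΔ i)).mono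
      fun _ hτi => abs_quant_add_le hΔ hτi
  calc _ ≤ 4 * ∫ ω, x ω j ^ 4 ∂μ + 4 * ∫ ω, x ω k ^ 4 ∂μ + 8 * (3 * Δ / 2) ^ 4 :=
        integral_sq_mul_le_of_abs_le (integrable_apply_pow_of_map_eq_multiGaussian hx hlawx j 4)
          (integrable_apply_pow_of_map_eq_multiGaussian hx hlawx k 4) (hquant j) (hquant k)
    _ ≤ 24 * opNorm T ^ 2 + 81 / 2 * Δ ^ 4 := by linarith [hmoment j, hmoment k]

/-- fourth-moment bound for the dithered quantized sample:
`E[(ẋ_j ẋ_k)²] ≤ 24‖T‖₂² + (81/2)Δ⁴`. -/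
theorem quantized_sample_fourth_moment_bound
    {d : ℕ} {Ω : Type} [MeasurableSpace Ω] (μ : Measure Ω) [IsProbabilityMeasure μ]
    (T : Matrix (Fin d) (Fin d) ℝ) (hpsd : T.PosSemidef)
    (htoep : ∃ v : Fin d → ℝ, T = toep v)
    (Δ : ℝ) (hΔ : 0 < Δ)
    (x τ : Ω → Fin d → ℝ) (hx : Measurable x) (hτ : Measurable τ)
    (hlawx : μ.map x = multiGaussian T hpsd)
    (hlawτ : μ.map τ = Measure.pi fun _ : Fin d => triMeasure Δ)
    (hindep : IndepFun x τ μ) :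
    ∀ j k, ∫ ω, (quant Δ (x ω j + τ ω j) * quant Δ (x ω k + τ ω k)) ^ 2 ∂μ ≤
      24 * opNorm T ^ 2 + 81 / 2 * Δ ^ 4 :=
  quantized_sample_fourth_moment_bound_general μ T hpsd Δ hΔ x τ hx hτ hlawx hlawτ
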